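/- Let P be a 1-differential poset, k and n positive integers with n ≥ 2, and let t_0 ⋖ t_1 ⋖ ⋯ and s_0 ⋖ s_1 ⋖ ⋯ be saturated chains as guaranteed for r = 1 (rank(t_m) = rank(s_m) = m, each covering at most one element, t_0 = s_0, t_1 = s_1, t_m ≠ s_m for m ≥ 2). Then (n−1)!_{1,k} · (n+1+k) is the smallest positive integer s such that s · v_{n,k} ∈ ℤP_n, where v_{n,k} := Σ_{j=0}^{n} (−1)^j U^j t_{n−j} / (j+1)!_{1,k} ∈ ℚP_n. -/

import Mathlib

open Matrix

variable {α : Type*}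

/-- The generalized factorial `ℓ!_{r,k} = (rℓ+k)(r(ℓ-1)+k)⋯(r·1+k)`. -/
def genFac (r k ℓ : ℕ) : ℕ := ∏ i ∈ Finset.range ℓ, (r * (i + 1) + k)

open Classical in
/-- The matrix of the up map `U_n : ℚP_n → ℚP_{n+1}`. -/
noncomputable def upMat [PartialOrder α] (rk : α → ℕ) (n : ℕ) :
    Matrix {x : α // rk x = n + 1} {x : α // rk x = n} ℚ :=
  Matrix.of fun z x => if x.1 ⋖ z.1 then 1 else 0

/-- The matrix of `DU_n := D_{n+1} U_n`. -/
noncomputable def duMat [PartialOrder α] (rk : α → ℕ)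
    [∀ n : ℕ, Fintype {x : α // rk x = n}] (n : ℕ) :
    Matrix {x : α // rk x = n} {x : α // rk x = n} ℚ :=
  (upMat rk n)ᵀ * upMat rk n

/-- `upIter rk m j v` is `U^j v` for `v ∈ ℚP_m`. -/
noncomputable def upIter [PartialOrder α] (rk : α → ℕ)
    [∀ n : ℕ, Fintype {x : α // rk x = n}] (m : ℕ) :
    (j : ℕ) → ({x : α // rk x = m} → ℚ) → ({x : α // rk x = m + j} → ℚ)
  | 0, v => v
  | j + 1, v => (upMat rk (m + j)).mulVec (upIter rk m j v)

/-- Transport a vector along an equality of ranks. -/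
noncomputable def rankCast [PartialOrder α] (rk : α → ℕ) (m n : ℕ)
    (v : {x : α // rk x = m} → ℚ) : {x : α // rk x = n} → ℚ :=
  fun x => if h : rk x.1 = m then v ⟨x.1, h⟩ else 0

open Classical in
/-- The standard basis vector of `y` in `ℚP_n`. -/
noncomputable def basisVec [PartialOrder α] (rk : α → ℕ) (n : ℕ) (y : α) :
    {x : α // rk x = n} → ℚ :=
  fun x => if x.1 = y then 1 else 0

/-- The vector `v_{n,k} := Σ_{j=0}^n (-1)^j U^j t_{n-j} / (j+1)!_{r,k}`. -/
noncomputable def vVec [PartialOrder α] (rk : α → ℕ)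
    [∀ n : ℕ, Fintype {x : α // rk x = n}] (t : ℕ → α) (r k n : ℕ) :
    {x : α // rk x = n} → ℚ :=
  ∑ j ∈ Finset.range (n + 1),
    ((-1 : ℚ) ^ j / (genFac r k (j + 1) : ℚ)) •
      rankCast rk ((n - j) + j) n (upIter rk (n - j) j (basisVec rk (n - j) (t (n - j))))

/-! The coefficient of `x` in `U^j y` counts saturated chains from `y` to `x`. As `t₀` has
rank `0`, (D1) makes `t₁` its only upper cover, so `U^n t₀ = U^{n-1} t₁` and the last two
summands of `v_{n,k}` merge into `(-1)^{n-1} U^{n-1} t₁ / ((n-1)!_{1,k} (n+1+k))`, because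
`1/n!_{1,k} - 1/(n+1)!_{1,k} = 1/((n-1)!_{1,k} (n+1+k))`. Every other denominator
`(j+1)!_{1,k}`, `j ≤ n-2`, divides `(n-1)!_{1,k}`, which gives integrality. Conversely, since
each `s_m` covers only `s_{m-1}`, the only saturated chain ending at `s_n` is
`s_0 ⋖ ⋯ ⋖ s_n`; as `t_m ≠ s_m` for `m ≥ 2` and `t₁ = s₁`, only the merged summand survives
at `s_n`, and the coefficient of `s_n` in `v_{n,k}` is `±1/((n-1)!_{1,k} (n+1+k))`. -/

open Finset

theorem genFac_succ (r k ℓ : ℕ) : genFac r k (ℓ + 1) = genFac r k ℓ * (r * (ℓ + 1) + k) :=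
  prod_range_succ _ _

theorem genFac_pos {r : ℕ} (hr : 0 < r) (k ℓ : ℕ) : 0 < genFac r k ℓ :=
  prod_pos fun _ _ => by positivity

theorem genFac_dvd_genFac (r k : ℕ) {a b : ℕ} (h : a ≤ b) : genFac r k a ∣ genFac r k b :=
  prod_dvd_prod_of_subset _ _ _ (range_subset_range.mpr h)

theorem inv_genFac_one_sub_inv_genFac_one (k p : ℕ) :
    (genFac 1 k (p + 1) : ℚ)⁻¹ - (genFac 1 k (p + 2) : ℚ)⁻¹ =
      ((genFac 1 k p * (p + 2 + k) : ℕ) : ℚ)⁻¹ := by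
  have hG : (genFac 1 k p : ℚ) ≠ 0 := by exact_mod_cast (genFac_pos one_pos k p).ne'
  simp only [genFac_succ, one_mul]
  push_cast
  field_simp
  ring

theorem le_of_natCast_mul_neg_one_pow_div_eq_intCast {c N p : ℕ} {m : ℤ} (hc : 0 < c)
    (h : (c : ℚ) * ((-1) ^ p / N) = m) : N ≤ c := by
  rcases Nat.eq_zero_or_pos N with rfl | hN
  · exact Nat.zero_le c
  have hsign : ((-1 : ℚ) ^ p) * (-1) ^ p = 1 := by rw [← mul_pow]; norm_num
  have hinv : (N : ℚ) * (N : ℚ)⁻¹ = 1 := mul_inv_cancel₀ (by positivity)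
  have hcq : (c : ℚ) = N * ((-1) ^ p * m) := by
    linear_combination (N : ℚ) * (-1) ^ p * h - (c : ℚ) * hsign -
      (c : ℚ) * (-1) ^ p * (-1) ^ p * hinv
  have hdvd : (N : ℤ) ∣ c := ⟨(-1) ^ p * m, by exact_mod_cast hcq⟩
  exact Nat.le_of_dvd hc (Int.natCast_dvd_natCast.mp hdvd)

section GradedPoset

variable [PartialOrder α] (rk : α → ℕ)

theorem upperCovers_eq_singleton_of_rank_eq_zero (hgrade : ∀ x y : α, x ⋖ y → rk y = rk x + 1)
    {y w : α} (hD1 : {x | y ⋖ x}.ncard = {z | z ⋖ y}.ncard + 1) (hy : rk y = 0) (hyw : y ⋖ w) :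
    {x | y ⋖ x} = {w} := by
  have hlower : {z | z ⋖ y} = ∅ :=
    Set.eq_empty_of_forall_notMem fun z hz => by have := hgrade z y hz; omega
  obtain ⟨a, ha⟩ := Set.ncard_eq_one.mp (by rw [hD1, hlower, Set.ncard_empty])
  have hw : w ∈ {x | y ⋖ x} := hyw
  rw [ha, Set.mem_singleton_iff] at hw
  rw [ha, hw]

variable [∀ n : ℕ, Fintype {x : α // rk x = n}]

theorem eq_of_covBy_of_covBy_of_ncard_le_one (hgrade : ∀ x y : α, x ⋖ y → rk y = rk x + 1)
    {x a b : α} (hx : {z | z ⋖ x}.ncard ≤ 1) (ha : a ⋖ x) (hb : b ⋖ x) : a = b := by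
  have hfin : {z | z ⋖ x}.Finite :=
    (Set.finite_range (Subtype.val : {z // rk z = rk x - 1} → α)).subset fun z hz =>
      ⟨⟨z, by have := hgrade z x hz; omega⟩, rfl⟩
  exact (Set.ncard_le_one hfin).mp hx a ha b hb

open Classical in
/-- For `rk y = m`, the number of saturated chains of length `j` from `y` up to `x`; the rank
index makes each step a finite sum over one rank level. -/
noncomputable def chainCount (m : ℕ) (y : α) : ℕ → α → ℕ
  | 0, x => if x = y then 1 else 0
  | j + 1, x => ∑ z : {z : α // rk z = m + j}, if z.1 ⋖ x then chainCount m y j z.1 else 0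

theorem upIter_basisVec_apply (m : ℕ) (y : α) :
    ∀ (j : ℕ) (x : {x : α // rk x = m + j}),
      upIter rk m j (basisVec rk m y) x = chainCount rk m y j x
  | 0, x => by
    simp only [upIter, chainCount, basisVec]
    split_ifs <;> simp
  | j + 1, x => by
    simp only [upIter, chainCount, mulVec, dotProduct, upMat, of_apply, upIter_basisVec_apply m y j]
    push_cast
    refine sum_congr rfl fun z _ => ?_
    split_ifs <;> simp

theorem vVec_apply (t : ℕ → α) (r k n : ℕ) (x : {x : α // rk x = n}) :
    vVec rk t r k n x = ∑ j ∈ range (n + 1),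
      (-1 : ℚ) ^ j / genFac r k (j + 1) * chainCount rk (n - j) (t (n - j)) j x := by
  rw [vVec, Finset.sum_apply]
  refine sum_congr rfl fun j hj => ?_
  have hx : rk x.1 = (n - j) + j := by have := mem_range.mp hj; rw [x.2]; omega
  rw [Pi.smul_apply, smul_eq_mul, rankCast, dif_pos hx, upIter_basisVec_apply]

open Classical in
theorem chainCount_apply_chain (s : ℕ → α) (hschain : ∀ m, s m ⋖ s (m + 1))
    (hrks : ∀ m, rk (s m) = m) (hunique : ∀ m z, z ⋖ s (m + 1) → z = s m) (m : ℕ) (y : α) :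
    ∀ j, chainCount rk m y j (s (m + j)) = if s m = y then 1 else 0
  | 0 => by simp [chainCount]
  | j + 1 => by
    let sj : {z // rk z = m + j} := ⟨s (m + j), hrks _⟩
    have hsj : ∀ z : {z // rk z = m + j}, z.1 ⋖ s (m + j + 1) ↔ z = sj := fun z =>
      ⟨fun hz => Subtype.ext (hunique _ _ hz), fun hz => hz ▸ hschain _⟩
    simp only [chainCount, ← add_assoc, hsj, sum_ite_eq', mem_univ, if_true]
    exact chainCount_apply_chain s hschain hrks hunique m y j

theorem chainCount_succ_of_upperCovers_eq {m : ℕ} {y w : α} (hy : rk y = m)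
    (hcov : {x | y ⋖ x} = {w}) :
    ∀ j x, chainCount rk m y (j + 1) x = chainCount rk (m + 1) w j x
  | 0, x => by
    have hcov' : y ⋖ x ↔ x = w := Set.ext_iff.mp hcov x
    simp only [chainCount]
    rw [sum_eq_single (⟨y, hy⟩ : {z // rk z = m + 0})] <;> aesop
  | j + 1, x => by
    rw [chainCount, chainCount, show m + (j + 1) = m + 1 + j by omega]
    simp only [chainCount_succ_of_upperCovers_eq hy hcov j]

end GradedPoset

section OneDifferential

variable [PartialOrder α] (rk : α → ℕ) [∀ n : ℕ, Fintype {x : α // rk x = n}]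

theorem vVec_one_apply_of_upperCovers_eq (t : ℕ → α) (ht0 : rk (t 0) = 0)
    (hcov : {x | t 0 ⋖ x} = {t 1}) (k p : ℕ) (x : {x : α // rk x = p + 1}) :
    vVec rk t 1 k (p + 1) x =
      ∑ j ∈ range p, (-1 : ℚ) ^ j / genFac 1 k (j + 1) *
          chainCount rk (p + 1 - j) (t (p + 1 - j)) j x +
        (-1) ^ p / ((genFac 1 k p * (p + 2 + k) : ℕ) : ℚ) * chainCount rk 1 (t 1) p x := by
  rw [vVec_apply, sum_range_succ, sum_range_succ, Nat.add_sub_cancel_left, Nat.sub_self,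
    chainCount_succ_of_upperCovers_eq rk ht0 hcov, zero_add]
  linear_combination
    (-1 : ℚ) ^ p * chainCount rk 1 (t 1) p x * inv_genFac_one_sub_inv_genFac_one k p

theorem natCast_mul_vVec_one_mem_range_intCast (t : ℕ → α) (ht0 : rk (t 0) = 0)
    (hcov : {x | t 0 ⋖ x} = {t 1}) (k p : ℕ) (x : {x : α // rk x = p + 1}) :
    ((genFac 1 k p * (p + 2 + k) : ℕ) : ℚ) * vVec rk t 1 k (p + 1) x ∈
      (Int.castRingHom ℚ).range := by
  set N := genFac 1 k p * (p + 2 + k)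
  have hN : (N : ℚ) ≠ 0 := by positivity [genFac_pos one_pos k p]
  rw [vVec_one_apply_of_upperCovers_eq rk t ht0 hcov, mul_add, mul_sum]
  refine add_mem (sum_mem fun j hj => ?_) ?_
  · have hdvd : genFac 1 k (j + 1) ∣ N :=
      dvd_mul_of_dvd_left (genFac_dvd_genFac 1 k (mem_range.mp hj)) _
    have hG : (genFac 1 k (j + 1) : ℚ) ≠ 0 := by exact_mod_cast (genFac_pos one_pos k _).ne'
    rw [show (N : ℚ) * ((-1) ^ j / genFac 1 k (j + 1) * chainCount rk _ _ j x) =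
        (-1) ^ j * ((N / genFac 1 k (j + 1) : ℕ) : ℚ) * chainCount rk _ _ j x by
      rw [Nat.cast_div hdvd hG]; ring]
    exact mul_mem (mul_mem (pow_mem (neg_mem (one_mem _)) _) (natCast_mem _ _)) (natCast_mem _ _)
  · rw [← mul_assoc, mul_div_cancel₀ _ hN]
    exact mul_mem (pow_mem (neg_mem (one_mem _)) _) (natCast_mem _ _)

theorem vVec_one_apply_chain (t s : ℕ → α) (ht0 : rk (t 0) = 0) (hcov : {x | t 0 ⋖ x} = {t 1})
    (hschain : ∀ m, s m ⋖ s (m + 1)) (hrks : ∀ m, rk (s m) = m)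
    (hunique : ∀ m z, z ⋖ s (m + 1) → z = s m) (h1 : t 1 = s 1)
    (hne : ∀ m, 2 ≤ m → t m ≠ s m) (k p : ℕ) :
    vVec rk t 1 k (p + 1) ⟨s (p + 1), hrks _⟩ =
      (-1) ^ p / ((genFac 1 k p * (p + 2 + k) : ℕ) : ℚ) := by
  have hcount := chainCount_apply_chain rk s hschain hrks hunique
  have hvanish : ∀ j ∈ range p, chainCount rk (p + 1 - j) (t (p + 1 - j)) j (s (p + 1)) = 0 :=
    fun j hj => by
      have hj := mem_range.mp hj
      rw [← Nat.sub_add_cancel (show j ≤ p + 1 by omega), Nat.add_sub_cancel, hcount,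
        if_neg fun h => hne _ (by omega) h.symm]
  have hone : chainCount rk 1 (t 1) p (s (p + 1)) = 1 := by
    rw [add_comm, hcount, if_pos h1.symm]
  rw [vVec_one_apply_of_upperCovers_eq rk t ht0 hcov, sum_eq_zero fun j hj => by
    rw [hvanish j hj, Nat.cast_zero, mul_zero], hone]
  simp

end OneDifferential

/-- For a `1`-differential poset, `(n-1)!_{1,k} · (n+1+k)` is the smallest positive
integer `s` such that `s · v_{n,k}` has integer coordinates. -/
theorem genFac_mul_isLeast_denominator_one_differential [PartialOrder α] [OrderBot α]
    (rk : α → ℕ) [∀ n : ℕ, Fintype {x : α // rk x = n}]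
    (hbot : rk ⊥ = 0)
    (hgrade : ∀ x y : α, x ⋖ y → rk y = rk x + 1)
    (hdown : ∀ x : α, x ≠ ⊥ → ∃ y : α, y ⋖ x)
    (hD1 : ∀ x : α, {z : α | x ⋖ z}.ncard = {y : α | y ⋖ x}.ncard + 1)
    (hD2 : ∀ x y : α, x ≠ y →
      {z : α | z ⋖ x ∧ z ⋖ y}.ncard = {z : α | x ⋖ z ∧ y ⋖ z}.ncard)
    (t : ℕ → α) (htchain : ∀ m : ℕ, t m ⋖ t (m + 1))
    (hrkt : ∀ m : ℕ, rk (t m) = m)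
    (hcovt : ∀ m : ℕ, {z : α | z ⋖ t m}.ncard ≤ 1)
    (s : ℕ → α) (hschain : ∀ m : ℕ, s m ⋖ s (m + 1))
    (hrks : ∀ m : ℕ, rk (s m) = m)
    (hcovs : ∀ m : ℕ, {z : α | z ⋖ s m}.ncard ≤ 1)
    (h0 : t 0 = s 0) (h1 : t 1 = s 1) (hne : ∀ m : ℕ, 2 ≤ m → t m ≠ s m)
    (k n : ℕ) (hk : 0 < k) (hn : 2 ≤ n) :
    IsLeast {c : ℕ | 0 < c ∧ ∀ x : {x : α // rk x = n},
        ∃ m : ℤ, (c : ℚ) * vVec rk t 1 k n x = (m : ℚ)}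
      (genFac 1 k (n - 1) * (n + 1 + k)) := by
  obtain ⟨p, rfl⟩ : ∃ p, n = p + 1 := ⟨n - 1, by omega⟩
  have hcov : {x | t 0 ⋖ x} = {t 1} :=
    upperCovers_eq_singleton_of_rank_eq_zero rk hgrade (hD1 _) (hrkt 0) (htchain 0)
  have hunique : ∀ m z, z ⋖ s (m + 1) → z = s m := fun m _ hz =>
    eq_of_covBy_of_covBy_of_ncard_le_one rk hgrade (hcovs _) hz (hschain m)
  refine ⟨⟨Nat.mul_pos (genFac_pos one_pos k _) (by omega), fun x => ?_⟩,
    fun c ⟨hc, hint⟩ => ?_⟩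
  · obtain ⟨m, hm⟩ := natCast_mul_vVec_one_mem_range_intCast rk t (hrkt 0) hcov k p x
    exact ⟨m, hm.symm⟩
  · obtain ⟨m, hm⟩ := hint ⟨s (p + 1), hrks _⟩
    rw [vVec_one_apply_chain rk t s (hrkt 0) hcov hschain hrks hunique h1 hne] at hm
    exact le_of_natCast_mul_neg_one_pow_div_eq_intCast hc hm
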